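/- Let SemiTh be the category of semi-theories (morphisms are functors that are the identity on objects and send projections to the corresponding projections) and AlgTh the full subcategory of algebraic theories, with R : AlgTh → SemiTh the inclusion (forgetful) functor. Then R admits a left adjoint L : SemiTh → AlgTh, and for every semi-theory C the unit η_C : C → RL C induces an isomorphism of strict-algebra categories η_C^* : Alg^{RLC} → Alg^C. -/

import Mathlib

open CategoryTheory Limits Topology Topology.Homotopy

noncomputable section

namespace SemiThPaper

/-! ### Weak homotopy equivalences -/

/-- The map induced by a continuous map on homotopy "groups" (sets for `N = Fin 0`). -/
def HomotopyGroup.map {X Y : Type} [TopologicalSpace X] [TopologicalSpace Y]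
    (f : C(X, Y)) (N : Type) (x : X) :
    HomotopyGroup N X x → HomotopyGroup N Y (f x) :=
  Quotient.map
    (fun g => ⟨f.comp g.1, fun y hy => by
      simp only [ContinuousMap.comp_apply]
      rw [g.2 y hy]⟩)
    (fun g h H => H.elim fun H => ⟨H.compContinuousMap f⟩)

/-- The map induced on path components. -/
def ZerothHomotopy.map {X Y : Type} [TopologicalSpace X] [TopologicalSpace Y]
    (f : C(X, Y)) : ZerothHomotopy X → ZerothHomotopy Y :=
  Quotient.map f (fun _ _ h => h.elim fun γ => ⟨γ.map f.continuous⟩)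

/-- A weak homotopy equivalence of topological spaces: a continuous map inducing a
bijection on path components and on all homotopy groups at all basepoints. -/
def IsWeakHomotopyEquiv {X Y : TopCat} (f : X ⟶ Y) : Prop :=
  Function.Bijective (ZerothHomotopy.map (f.hom : C(X, Y))) ∧
    ∀ (n : ℕ) (x : X), Function.Bijective (HomotopyGroup.map (f.hom : C(X, Y)) (Fin n) x)

/-- A weak equivalence of simplicial sets: a map whose geometric realization is a
weak homotopy equivalence. -/
def WeakEquiv {A B : SSet} (f : A ⟶ B) : Prop :=
  IsWeakHomotopyEquiv (SSet.toTop.map f)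


/-! ### Semi-theories -/

/-- The objects `[1], [2], [3], …` of a semi-theory, indexed by positive integers. -/
@[ext]
structure Ob : Type where
  val : ℕ+

instance : Coe ℕ+ Ob := ⟨Ob.mk⟩

/-- An (unpointed) semi-theory: a category with objects `[1], [2], …`
together with distinguished projection morphisms `p^n_k : [n] ⟶ [1]`, where `p^1_1 = 𝟙 [1]`. -/
structure SemiTheory : Type 1 where
  cat : Category.{0, 0} Ob
  proj : ∀ n : ℕ+, Fin n → @Quiver.Hom Ob cat.toCategoryStruct.toQuiver ⟨n⟩ ⟨1⟩
  proj_one : proj 1 ⟨0, Nat.one_pos⟩ = cat.toCategoryStruct.id ⟨1⟩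

/-- The category of diagrams of simplicial sets over (the underlying category of)
a semi-theory. -/
abbrev SemiTheory.Diag (S : SemiTheory) : Type 1 :=
  @CategoryTheory.Functor Ob S.cat SSet _

/-- The `n`-fold levelwise power of a simplicial set. -/
@[simps]
def finPow (n : ℕ+) (A : SSet) : SSet where
  obj m := Fin n → A.obj m
  map θ := ↾(fun a k => A.map θ (a k))

/-- The canonical comparison map `X[n] ⟶ X[1]^n` of a diagram over a semi-theory,
whose components are induced by the projections. -/
def SemiTheory.projFan (S : SemiTheory) (X : S.Diag) (n : ℕ+) :
    (letI := S.cat; (X.obj ⟨n⟩ ⟶ finPow n (X.obj ⟨1⟩))) :=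
  letI := S.cat
  { app := fun m => ↾(fun a k => (X.map (S.proj n k)).app m a)
    naturality := fun m m' θ => by
      refine TypeCat.homEquiv.injective (funext fun a => ?_)
      funext k
      first
        | exact (FunctorToTypes.naturality (X.map (S.proj n k)) θ a).symm
        | exact FunctorToTypes.naturality (X.map (S.proj n k)) θ a }

/-- A strict algebra over a semi-theory: the comparison maps `X[n] ⟶ X[1]^n` are
isomorphisms for all `n > 1`. -/
def SemiTheory.IsStrictAlgebra (S : SemiTheory) (X : S.Diag) : Prop :=
  ∀ n : ℕ+, 1 < (n : ℕ) → IsIso (S.projFan X n)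

/-- A homotopy algebra over a semi-theory: the comparison maps `X[n] ⟶ X[1]^n` are
weak equivalences of simplicial sets for all `n > 1`. -/
def SemiTheory.IsHomotopyAlgebra (S : SemiTheory) (X : S.Diag) : Prop :=
  ∀ n : ℕ+, 1 < (n : ℕ) → WeakEquiv (S.projFan X n)

/-- A semi-theory is an algebraic theory if composition with the projections induces
bijections `Hom([m],[n]) ≅ Hom([m],[1])^n` for all `m` and all `n > 1`. -/
def SemiTheory.IsAlgebraic (S : SemiTheory) : Prop :=
  letI := S.cat
  ∀ (m n : ℕ+), 1 < (n : ℕ) →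
    Function.Bijective (fun (f : (⟨m⟩ : Ob) ⟶ ⟨n⟩) (k : Fin n) => f ≫ S.proj n k)

/-- The comparison map `X[n] ⟶ X[1]^n` for a diagram of simplicial sets over any
category equipped with objects `[n]` and projection morphisms. -/
def projFanAt {C : Type} [Category.{0} C] (o : ℕ+ → C) (p : ∀ n : ℕ+, Fin n → (o n ⟶ o 1))
    (X : C ⥤ SSet) (n : ℕ+) : X.obj (o n) ⟶ finPow n (X.obj (o 1)) where
  app m := ↾(fun a k => (X.map (p n k)).app m a)
  naturality m m' θ := by
    refine TypeCat.homEquiv.injective (funext fun a => ?_)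
    funext k
    first
      | exact (FunctorToTypes.naturality (X.map (p n k)) θ a).symm
      | exact FunctorToTypes.naturality (X.map (p n k)) θ a

/-- Strictness of a diagram with respect to given objects and projections. -/
def IsStrictAt {C : Type} [Category.{0} C] (o : ℕ+ → C)
    (p : ∀ n : ℕ+, Fin n → (o n ⟶ o 1)) (X : C ⥤ SSet) : Prop :=
  ∀ n : ℕ+, 1 < (n : ℕ) → IsIso (projFanAt o p X n)

/-- The homotopy-algebra condition for a diagram with respect to given objects
and projections. -/
def IsHomotopyAt {C : Type} [Category.{0} C] (o : ℕ+ → C)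
    (p : ∀ n : ℕ+, Fin n → (o n ⟶ o 1)) (X : C ⥤ SSet) : Prop :=
  ∀ n : ℕ+, 1 < (n : ℕ) → WeakEquiv (projFanAt o p X n)

/-! ### Free semi-theories -/

/-- Generating data for a free semi-theory: a family of free generators that are
not projections (the projections are added separately as free generators). -/
structure GenData : Type 1 where
  gen : ℕ+ → ℕ+ → Type

/-- The generating quiver of the free semi-theory on `G`: the generators of `G`
together with projection arrows `p^n_k : [n] → [1]` for `n > 1`
(the projection `p^1_1` is the identity, i.e. the empty path). -/
inductive Arr (G : GenData) : ℕ+ → ℕ+ → Type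
  | gen {a b : ℕ+} : G.gen a b → Arr G a b
  | proj {n : ℕ+} (h : 1 < (n : ℕ)) (k : Fin n) : Arr G n 1

/-- The object type of the free semi-theory on `G` (a copy of `Ob`). -/
def FreeOb (G : GenData) : Type := Ob

instance freeQuiver (G : GenData) : Quiver (FreeOb G) :=
  ⟨fun a b => Arr G (Ob.val a) (Ob.val b)⟩

/-- The free semi-theory on `G`, as a category: the paths category on the
generating quiver. -/
abbrev FreeST (G : GenData) := CategoryTheory.Paths (FreeOb G)

/-- The object `[n]` of the free semi-theory. -/
def FreeST.of (G : GenData) (n : ℕ+) : FreeST G := (⟨n⟩ : Ob)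

/-- The generating projection arrow, as an arrow of the generating quiver. -/
def projArr (G : GenData) {n : ℕ+} (h : 1 < (n : ℕ)) (k : Fin n) :
    @Quiver.Hom (FreeOb G) _ (FreeST.of G n) (FreeST.of G 1) := Arr.proj h k

/-- The projection `p^n_k` in the free semi-theory. -/
def projPath (G : GenData) (n : ℕ+) (k : Fin n) : FreeST.of G n ⟶ FreeST.of G 1 :=
  if h : 1 < (n : ℕ) then (projArr G h k).toPath
  else eqToHom (congrArg (FreeST.of G)
    (PNat.coe_injective (by
      rw [PNat.one_coe]
      exact le_antisymm (not_lt.1 h) n.pos)))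

/-- The free semi-theory on `G`, as a semi-theory. -/
def freeSemiTheory (G : GenData) : SemiTheory where
  cat := inferInstanceAs (Category (FreeST G))
  proj n k := projPath G n k
  proj_one := by
    show projPath G 1 ⟨0, Nat.one_pos⟩ = _
    rw [projPath, dif_neg (by norm_num)]
    rfl

/-- The initial semi-theory `P` has no generators besides the projections. -/
def emptyGen : GenData := ⟨fun _ _ => PEmpty⟩

/-- The underlying category of the initial semi-theory `P`. -/
abbrev PCat := FreeST emptyGen

/-- The initial semi-theory `P`: its only non-identity morphisms are the projections. -/
def PTheory : SemiTheory := freeSemiTheory emptyGen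

/-- The action of the unique morphism of semi-theories `P ⟶ C` on generating arrows. -/
def jArr (G : GenData) : ∀ {a b : ℕ+}, Arr emptyGen a b →
    @Quiver.Path (FreeOb G) _ ((⟨a⟩ : Ob) : FreeST G) ((⟨b⟩ : Ob) : FreeST G)
  | _, _, .gen α => α.elim
  | _, _, .proj h k => (projArr G h k).toPath

/-- The unique morphism of semi-theories `P ⟶ C` into a free semi-theory. -/
def Jfree (G : GenData) : PCat ⥤ FreeST G :=
  Paths.lift
    { obj := fun n => (n : FreeST G)
      map := fun {a b} e => jArr G e }

/-! ### The completion of a free semi-theory -/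

/-- Trees representing the morphisms `[n] ⟶ [1]` of the completion `C̄` of a free
semi-theory: either a single edge labelled by a projection `p^n_k`, or a tree whose
lowest edge is labelled by a component `α_i` of a non-projection generator
`α : [m] ⟶ [r]` and which is obtained by grafting `m` smaller trees. -/
inductive CTree (G : GenData) (n : ℕ+) : Type
  | proj (k : Fin n) : CTree G n
  | node {m r : ℕ+} (α : G.gen m r) (i : Fin r) (ts : Fin m → CTree G n) : CTree G n

/-- Morphisms `[n] ⟶ [m]` in the completion: `m`-tuples of trees. -/
def CompHom (G : GenData) (n m : ℕ+) : Type := Fin m → CTree G n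

/-- Grafting: substituting the trees `T k` for the initial edges labelled `p^m_k`. -/
def CTree.graft {G : GenData} {n m : ℕ+} : CTree G m → CompHom G n m → CTree G n
  | .proj k, T => T k
  | .node α i ts, T => .node α i (fun j => (ts j).graft T)

/-- The identity of the completion. -/
def compId (G : GenData) (n : ℕ+) : CompHom G n n := fun k => .proj k

/-- Composition in the completion, by grafting. -/
def compComp {G : GenData} {a b c : ℕ+} (T : CompHom G a b) (S : CompHom G b c) :
    CompHom G a c :=
  fun j => (S j).graft T

theorem CTree.graft_id {G : GenData} {m : ℕ+} (t : CTree G m) :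
    t.graft (compId G m) = t := by
  induction t with
  | proj k => rfl
  | node α i ts ih =>
      simp only [CTree.graft]
      congr 1
      funext j
      exact ih j

theorem CTree.graft_graft {G : GenData} {a b c : ℕ+} (s : CTree G c)
    (U : CompHom G b c) (T : CompHom G a b) :
    (s.graft U).graft T = s.graft (compComp T U) := by
  induction s with
  | proj k => rfl
  | node α i ts ih =>
      simp only [CTree.graft]
      congr 1
      funext j
      exact ih j

/-- The object type of the completion (a copy of `Ob`). -/
def CompOb (G : GenData) : Type := Ob

/-- The completion `C̄` of a free semi-theory, as a category. -/
instance compCategory (G : GenData) : Category (CompOb G) where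
  Hom n m := CompHom G (Ob.val n) (Ob.val m)
  id n := compId G _
  comp f g := compComp f g
  id_comp f := funext fun j => CTree.graft_id _
  comp_id f := rfl
  assoc f g h := funext fun j => (CTree.graft_graft _ _ _).symm

/-- The object `[n]` of the completion. -/
def CompOb.of (G : GenData) (n : ℕ+) : CompOb G := (⟨n⟩ : Ob)

/-- The projection `p̂^n_k` of the completion: a single edge labelled `p^n_k`. -/
def compProj (G : GenData) (n : ℕ+) (k : Fin n) : CompOb.of G n ⟶ CompOb.of G 1 :=
  fun _ => .proj k

/-- The completion, as a semi-theory. -/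
def compSemiTheory (G : GenData) : SemiTheory where
  cat := inferInstanceAs (Category (CompOb G))
  proj n k := compProj G n k
  proj_one := by
    funext i
    have h0 : i = ⟨0, Nat.one_pos⟩ := Fin.ext (Nat.lt_one_iff.mp i.isLt)
    rw [h0]
    rfl

/-- The completion functor `Φ` on generating arrows. -/
def phiArr (G : GenData) : ∀ {a b : ℕ+}, Arr G a b → CompHom G a b
  | _, _, .gen α => fun i => .node α i (fun k => .proj k)
  | _, _, .proj _ k => fun _ => .proj k

/-- The completion functor `Φ_C : C ⟶ C̄` of a free semi-theory. -/
def phi (G : GenData) : FreeST G ⥤ CompOb G :=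
  Paths.lift
    { obj := fun n => (n : CompOb G)
      map := fun {a b} e => phiArr G e }

/-! ### Discrete simplicial sets, products, mapping complexes -/

/-- The discrete simplicial set on a type. -/
@[simps]
def disc (A : Type) : SSet where
  obj _ := A
  map _ := ↾id

/-- The map of discrete simplicial sets induced by a function. -/
@[simps]
def disc.map {A B : Type} (f : A → B) : disc A ⟶ disc B where
  app _ := ↾f

/-- The diagram of (discrete) simplicial sets corepresented by the object `[n]`
of a semi-theory. -/
def SemiTheory.corep (S : SemiTheory) (n : ℕ+) : S.Diag :=
  letI := S.cat
  { obj := fun m => disc ((⟨n⟩ : Ob) ⟶ m)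
    map := fun f => disc.map (fun g => g ≫ f)
    map_id := fun m => by
      apply NatTrans.ext
      funext x
      refine TypeCat.homEquiv.injective (funext fun g => ?_)
      show g ≫ 𝟙 m = g
      exact Category.comp_id _
    map_comp := fun f f' => by
      apply NatTrans.ext
      funext x
      refine TypeCat.homEquiv.injective (funext fun g => ?_)
      show g ≫ (_ ≫ _) = _
      exact (Category.assoc _ _ _).symm }

/-- Levelwise product of two simplicial sets. -/
@[simps]
def mulC (A K : SSet) : SSet where
  obj m := A.obj m × K.obj m
  map θ := ↾(fun p => (A.map θ p.1, K.map θ p.2))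
  map_id m := by refine TypeCat.homEquiv.injective (funext fun p => ?_); simp
  map_comp f g := by refine TypeCat.homEquiv.injective (funext fun p => ?_); simp

/-- `f × id` on levelwise products. -/
@[simps]
def mulC.mapLeft {A B : SSet} (f : A ⟶ B) (K : SSet) : mulC A K ⟶ mulC B K where
  app m := ↾(fun p => (f.app m p.1, p.2))
  naturality m m' θ := by
    refine TypeCat.homEquiv.injective (funext fun p => ?_)
    show (f.app m' (A.map θ p.1), K.map θ p.2) = (B.map θ (f.app m p.1), K.map θ p.2)
    congr 1
    first
      | exact (FunctorToTypes.naturality f θ p.1).symm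
      | exact FunctorToTypes.naturality f θ p.1

/-- `id × g` on levelwise products. -/
@[simps]
def mulC.mapRight (A : SSet) {K L : SSet} (g : K ⟶ L) : mulC A K ⟶ mulC A L where
  app m := ↾(fun p => (p.1, g.app m p.2))
  naturality m m' θ := by
    refine TypeCat.homEquiv.injective (funext fun p => ?_)
    show (A.map θ p.1, g.app m' (K.map θ p.2)) = (A.map θ p.1, L.map θ (g.app m p.2))
    congr 1
    first
      | exact (FunctorToTypes.naturality g θ p.2).symm
      | exact FunctorToTypes.naturality g θ p.2

theorem mulC.mapRight_id (A K : SSet) : mulC.mapRight A (𝟙 K) = 𝟙 (mulC A K) := by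
  apply NatTrans.ext; funext x; rfl

theorem mulC.mapRight_comp (A : SSet) {K L M : SSet} (g : K ⟶ L) (h : L ⟶ M) :
    mulC.mapRight A (g ≫ h) = mulC.mapRight A g ≫ mulC.mapRight A h := by
  apply NatTrans.ext; funext x; rfl

/-- Naturality, in applied form. -/
theorem natApply {C : Type} [Category C] {X Y : C ⥤ SSet} (f : X ⟶ Y)
    {c c' : C} (φ : c ⟶ c') (x : SimplexCategoryᵒᵖ) (a : (X.obj c).obj x) :
    (f.app c').app x ((X.map φ).app x a) = (Y.map φ).app x ((f.app c).app x a) :=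
  congrArg (fun g : (X.obj c).obj x ⟶ (Y.obj c').obj x => g a)
    (NatTrans.congr_app (f.naturality φ) x)

/-- The objectwise product of a diagram of simplicial sets with a constant
simplicial set. -/
@[simps]
def prodConst {C : Type} [Category C] (X : C ⥤ SSet) (K : SSet) : C ⥤ SSet where
  obj c := mulC (X.obj c) K
  map f := mulC.mapLeft (X.map f) K
  map_id c := by
    apply NatTrans.ext; funext x
    refine TypeCat.homEquiv.injective (funext fun p => ?_)
    show ((X.map (𝟙 c)).app x p.1, p.2) = p
    rw [X.map_id]
    rfl
  map_comp f g := by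
    apply NatTrans.ext; funext x
    refine TypeCat.homEquiv.injective (funext fun p => ?_)
    show ((X.map (f ≫ g)).app x p.1, p.2) = _
    rw [X.map_comp]
    rfl

/-- Functoriality of `prodConst` in the diagram variable. -/
@[simps]
def prodConst.mapX {C : Type} [Category C] {X X' : C ⥤ SSet} (f : X ⟶ X') (K : SSet) :
    prodConst X K ⟶ prodConst X' K where
  app c := mulC.mapLeft (f.app c) K
  naturality c c' φ := by
    apply NatTrans.ext; funext x
    refine TypeCat.homEquiv.injective (funext fun p => ?_)
    first
      | exact Prod.ext (natApply f φ x p.1) rfl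
      | exact Prod.ext (natApply f φ x p.1).symm rfl

/-- Functoriality of `prodConst` in the constant variable. -/
@[simps]
def prodConst.mapK {C : Type} [Category C] (X : C ⥤ SSet) {K L : SSet} (g : K ⟶ L) :
    prodConst X K ⟶ prodConst X L where
  app c := mulC.mapRight (X.obj c) g
  naturality c c' φ := by
    apply NatTrans.ext; funext x
    rfl

theorem prodConst.mapK_id {C : Type} [Category C] (X : C ⥤ SSet) (K : SSet) :
    prodConst.mapK X (𝟙 K) = 𝟙 (prodConst X K) := by
  apply NatTrans.ext; funext c
  exact mulC.mapRight_id _ _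

theorem prodConst.mapK_comp {C : Type} [Category C] (X : C ⥤ SSet) {K L M : SSet}
    (g : K ⟶ L) (h : L ⟶ M) :
    prodConst.mapK X (g ≫ h) = prodConst.mapK X g ≫ prodConst.mapK X h := by
  apply NatTrans.ext; funext c
  exact mulC.mapRight_comp _ _ _

/-- The standard simplex `Δ[k]`, for `k : SimplexCategoryᵒᵖ`. -/
def stdS (k : SimplexCategoryᵒᵖ) : SSet := SSet.stdSimplex.obj k.unop

/-- Functoriality of the standard simplex (contravariantly in `SimplexCategoryᵒᵖ`). -/
def stdMap {k l : SimplexCategoryᵒᵖ} (θ : k ⟶ l) : stdS l ⟶ stdS k :=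
  SSet.stdSimplex.map θ.unop

theorem stdMap_id (k : SimplexCategoryᵒᵖ) : stdMap (𝟙 k) = 𝟙 (stdS k) :=
  SSet.stdSimplex.map_id _

theorem stdMap_comp {k l m : SimplexCategoryᵒᵖ} (θ : k ⟶ l) (η : l ⟶ m) :
    stdMap (θ ≫ η) = stdMap η ≫ stdMap θ :=
  SSet.stdSimplex.map_comp _ _

/-- The simplicial mapping complex of two diagrams of simplicial sets: its
`m`-simplices are the natural transformations `X × Δ[m] ⟶ Y`. -/
def MapCx {C : Type} [Category C] (X Y : C ⥤ SSet) : SSet where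
  obj m := prodConst X (stdS m) ⟶ Y
  map {m m'} θ := ↾(fun t => prodConst.mapK X (stdMap θ) ≫ t)
  map_id m := by
    refine TypeCat.homEquiv.injective (funext fun t => ?_)
    simp [stdMap_id, prodConst.mapK_id]
  map_comp θ η := by
    refine TypeCat.homEquiv.injective (funext fun t => ?_)
    simp [stdMap_comp, prodConst.mapK_comp]

/-- Precomposition on mapping complexes. -/
def MapCx.pre {C : Type} [Category C] {X X' : C ⥤ SSet} (f : X' ⟶ X) (Y : C ⥤ SSet) :
    MapCx X Y ⟶ MapCx X' Y where
  app m := ↾(fun t => prodConst.mapX f (stdS m) ≫ t)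
  naturality m m' θ := by
    rfl

/-- Postcomposition on mapping complexes. -/
def MapCx.post {C : Type} [Category C] (X : C ⥤ SSet) {Y Y' : C ⥤ SSet} (g : Y ⟶ Y') :
    MapCx X Y ⟶ MapCx X Y' where
  app m := ↾(fun t => t ≫ g)
  naturality m m' θ := by
    rfl

/-- Restriction of mapping complexes along a functor. -/
def MapCx.whisk {C D : Type} [Category C] [Category D] (F : D ⥤ C) (X Y : C ⥤ SSet) :
    MapCx X Y ⟶ MapCx (F ⋙ X) (F ⋙ Y) where
  app m := ↾(fun t =>
    (show prodConst (F ⋙ X) (stdS m) ⟶ F ⋙ Y from CategoryTheory.Functor.whiskerLeft F t))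
  naturality m m' θ := by
    rfl

/-- The simplicial mapping complex of two simplicial sets: its `m`-simplices are
the maps `A × Δ[m] ⟶ B`. -/
def sMap (A B : SSet) : SSet where
  obj m := mulC A (stdS m) ⟶ B
  map {m m'} θ := ↾(fun t => mulC.mapRight A (stdMap θ) ≫ t)
  map_id m := by
    refine TypeCat.homEquiv.injective (funext fun t => ?_)
    simp [stdMap_id, mulC.mapRight_id]
  map_comp θ η := by
    refine TypeCat.homEquiv.injective (funext fun t => ?_)
    simp [stdMap_comp, mulC.mapRight_comp]

/-- Precomposition on simplicial mapping complexes. -/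
def sMap.pre {A A' : SSet} (f : A' ⟶ A) (B : SSet) : sMap A B ⟶ sMap A' B where
  app m := ↾(fun t => mulC.mapLeft f (stdS m) ≫ t)
  naturality m m' θ := by
    rfl

/-- Postcomposition on simplicial mapping complexes. -/
def sMap.post (A : SSet) {B B' : SSet} (g : B ⟶ B') : sMap A B ⟶ sMap A B' where
  app m := ↾(fun t => t ≫ g)
  naturality m m' θ := by
    rfl

/-! ### Strict-algebra categories and the category of semi-theories -/

/-- The Yoneda-type map `C_1 ⟶ C_m` of corepresented diagrams corresponding to the
projection `p^m_j` (given by precomposition with `p^m_j`). -/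
def SemiTheory.projYoneda (S : SemiTheory) (m : ℕ+) (j : Fin m) :
    (letI := S.cat; (S.corep 1 ⟶ S.corep m)) :=
  letI := S.cat
  { app := fun r => disc.map (fun g => S.proj m j ≫ g)
    naturality := fun r r' f => by
      apply NatTrans.ext
      funext x
      refine TypeCat.homEquiv.injective (funext fun g => ?_)
      exact (Category.assoc _ _ _).symm }

/-- The category of strict algebras over a semi-theory. -/
def SemiTheory.Alg (S : SemiTheory) : Type 1 :=
  letI := S.cat
  ObjectProperty.FullSubcategory S.IsStrictAlgebra

instance SemiTheory.algCategory (S : SemiTheory) : Category S.Alg :=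
  letI := S.cat
  inferInstanceAs (Category (ObjectProperty.FullSubcategory S.IsStrictAlgebra))

/-- The inclusion `J_C` of the strict algebras into all diagrams. -/
def SemiTheory.algIncl (S : SemiTheory) : S.Alg ⥤ S.Diag :=
  letI := S.cat
  ObjectProperty.ι S.IsStrictAlgebra

/-- Object part of a functor, with explicit category instances (avoiding
instance-resolution issues when several category structures live on one type). -/
def fobj {C D : Type} {iC : Category.{0} C} {iD : Category.{0} D}
    (F : @CategoryTheory.Functor C iC D iD) (a : C) : D :=
  @Prefunctor.obj C iC.toCategoryStruct.toQuiver D iD.toCategoryStruct.toQuiver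
    (@CategoryTheory.Functor.toPrefunctor C iC D iD F) a

/-- Morphism part of a functor, with explicit category instances. -/
def fmap {C D : Type} {iC : Category.{0} C} {iD : Category.{0} D}
    (F : @CategoryTheory.Functor C iC D iD) {a b : C}
    (f : @Quiver.Hom C iC.toCategoryStruct.toQuiver a b) :
    @Quiver.Hom D iD.toCategoryStruct.toQuiver (fobj F a) (fobj F b) :=
  @Prefunctor.map C iC.toCategoryStruct.toQuiver D iD.toCategoryStruct.toQuiver
    (@CategoryTheory.Functor.toPrefunctor C iC D iD F) a b f

/-- A morphism of semi-theories: a functor which is the identity on objects and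
sends projections to the corresponding projections. -/
structure STHom (S T : SemiTheory) : Type where
  func : @CategoryTheory.Functor Ob S.cat Ob T.cat
  obj_eq : ∀ n : Ob, fobj func n = n
  proj_eq : ∀ (n : ℕ+) (k : Fin n),
    fmap func (S.proj n k) =
      (letI := T.cat; eqToHom (obj_eq ⟨n⟩) ≫ T.proj n k ≫ eqToHom (obj_eq ⟨1⟩).symm)

theorem fmap_comp {C D : Type} {iC : Category.{0} C} {iD : Category.{0} D}
    (F : @CategoryTheory.Functor C iC D iD) {a b c : C}
    (f : @Quiver.Hom C iC.toCategoryStruct.toQuiver a b)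
    (g : @Quiver.Hom C iC.toCategoryStruct.toQuiver b c) :
    fmap F (@CategoryStruct.comp C iC.toCategoryStruct a b c f g)
      = @CategoryStruct.comp D iD.toCategoryStruct _ _ _ (fmap F f) (fmap F g) :=
  @CategoryTheory.Functor.map_comp C iC D iD F a b c f g

theorem fmap_eqToHom {C D : Type} {iC : Category.{0} C} {iD : Category.{0} D}
    (F : @CategoryTheory.Functor C iC D iD) {a b : C} (h : a = b) :
    fmap F (@eqToHom C iC.toCategoryStruct a b h)
      = @eqToHom D iD.toCategoryStruct (fobj F a) (fobj F b) (congrArg (fobj F) h) := by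
  subst h
  show fmap F (@CategoryStruct.id C iC.toCategoryStruct a) = _
  exact @CategoryTheory.Functor.map_id C iC D iD F a

theorem STHom.ext' {S T : SemiTheory} {f g : STHom S T} (h : f.func = g.func) : f = g := by
  cases f; cases g; cases h; rfl

/-- The category of semi-theories. -/
instance : Category SemiTheory where
  Hom := STHom
  id S :=
    { func := @CategoryTheory.Functor.id Ob S.cat
      obj_eq := fun _ => rfl
      proj_eq := fun n k => by
        letI := S.cat
        show S.proj n k = 𝟙 _ ≫ S.proj n k ≫ 𝟙 _
        simp }
  comp {S T U} f g :=
    { func := @CategoryTheory.Functor.comp Ob S.cat Ob T.cat Ob U.cat f.func g.func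
      obj_eq := fun n => by
        show fobj g.func (fobj f.func n) = n
        rw [f.obj_eq, g.obj_eq]
      proj_eq := fun n k => by
        letI := U.cat
        show fmap g.func (fmap f.func (S.proj n k)) = _
        rw [f.proj_eq n k, fmap_comp, fmap_comp, fmap_eqToHom, fmap_eqToHom,
          g.proj_eq n k]
        simp [Category.assoc, eqToHom_trans]
        all_goals rfl }
  id_comp {S T} f := STHom.ext' (@CategoryTheory.Functor.id_comp Ob S.cat Ob T.cat f.func)
  comp_id {S T} f := STHom.ext' (@CategoryTheory.Functor.comp_id Ob S.cat Ob T.cat f.func)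
  assoc {S T U V} f g h :=
    STHom.ext' (@CategoryTheory.Functor.assoc Ob S.cat Ob T.cat Ob U.cat Ob V.cat
      f.func g.func h.func)


/-- Restriction of a diagram along a morphism of semi-theories. -/
def STHom.restrict {S T : SemiTheory} (f : STHom S T) (A : T.Diag) : S.Diag :=
  @CategoryTheory.Functor.comp Ob S.cat Ob T.cat SSet _ f.func A

/-- Restriction of a morphism of diagrams along a morphism of semi-theories. -/
def STHom.restrictMap {S T : SemiTheory} (f : STHom S T) {A B : T.Diag} (φ : A ⟶ B) :
    f.restrict A ⟶ f.restrict B :=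
  @CategoryTheory.Functor.whiskerLeft Ob S.cat Ob T.cat SSet _ f.func A B φ

/-- A morphism of semi-theories `f : S ⟶ T` induces, by restriction, an isomorphism
between the categories of strict algebras of `T` and `S`. -/
def STHom.inducesAlgebraIso {S T : SemiTheory} (f : STHom S T) : Prop :=
  ∃ (F : T.Alg ⥤ S.Alg) (F' : S.Alg ⥤ T.Alg)
    (hobj : ∀ A : T.Alg, (F.obj A).obj = f.restrict A.obj),
    (∀ (A B : T.Alg) (φ : A ⟶ B),
      (F.map φ).hom = eqToHom (hobj A) ≫ f.restrictMap φ.hom ≫ eqToHom (hobj B).symm) ∧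
    F ⋙ F' = 𝟭 T.Alg ∧ F' ⋙ F = 𝟭 S.Alg

/-! The left adjoint is the completion: the morphisms `[m] ⟶ [1]` of `L S` are the terms built
from variables `x₁, …, xₘ` by applying morphisms `[n] ⟶ [1]` of `S` to `n`-tuples of terms,
modulo the congruence forcing `p^n_k(t) = t_k` and `(f ≫ g)(t) = g((f ≫ p^n_j)(t))_j`, and a
morphism `[m] ⟶ [n]` is an `n`-tuple of those. A morphism from `S` to an algebraic theory `T`
extends along the unit `S ⟶ L S` by evaluating terms with the tupling bijections of `T`, and
uniquely so, since every term is obtained from unit images by tupling and composition.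

A strict `S`-algebra `X` is the same thing as a morphism from `S` to the endomorphism theory of
`X`, whose morphisms `[a] ⟶ [b]` are the maps `X[a] ⟶ X[b]`; strictness makes that theory
algebraic. The universal property therefore extends `X` uniquely along the unit, and the same
evaluation of terms shows that morphisms of algebras stay natural after extension. -/

namespace SemiTheory

/- `S.cat` is a structure field, not an instance, so morphisms, identities and composition of a
semi-theory are spelled out with explicit instances. -/
abbrev Mor (S : SemiTheory) (a b : ℕ+) : Type :=
  @Quiver.Hom Ob S.cat.toCategoryStruct.toQuiver ⟨a⟩ ⟨b⟩

abbrev comp {S : SemiTheory} {a b c : ℕ+} (f : S.Mor a b) (g : S.Mor b c) : S.Mor a c :=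
  @CategoryStruct.comp Ob S.cat.toCategoryStruct ⟨a⟩ ⟨b⟩ ⟨c⟩ f g

abbrev idMor (S : SemiTheory) (a : ℕ+) : S.Mor a a :=
  @CategoryStruct.id Ob S.cat.toCategoryStruct ⟨a⟩

variable {S : SemiTheory}

theorem idMor_comp {a b : ℕ+} (f : S.Mor a b) : comp (S.idMor a) f = f :=
  @Category.id_comp Ob S.cat ⟨a⟩ ⟨b⟩ f

theorem comp_idMor {a b : ℕ+} (f : S.Mor a b) : comp f (S.idMor b) = f :=
  @Category.comp_id Ob S.cat ⟨a⟩ ⟨b⟩ f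

theorem comp_assoc {a b c d : ℕ+} (f : S.Mor a b) (g : S.Mor b c) (h : S.Mor c d) :
    comp (comp f g) h = comp f (comp g h) :=
  @Category.assoc Ob S.cat _ _ _ _ f g h

theorem proj_one_eq (S : SemiTheory) (j : Fin (1 : ℕ+)) : S.proj 1 j = S.idMor 1 := by
  obtain rfl : j = ⟨0, Nat.one_pos⟩ := Fin.ext (Nat.lt_one_iff.mp j.isLt)
  exact S.proj_one

theorem IsAlgebraic.bijective (hS : S.IsAlgebraic) (m n : ℕ+) :
    Function.Bijective fun (f : S.Mor m n) (k : Fin n) => comp f (S.proj n k) := by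
  by_cases hn : 1 < (n : ℕ)
  · exact hS m n hn
  · obtain rfl : n = 1 := PNat.coe_eq_one_iff.mp (by have := n.pos; omega)
    simp only [proj_one_eq, comp_idMor]
    exact (Equiv.funUnique (Fin 1) (S.Mor m 1)).symm.bijective

theorem IsAlgebraic.hom_ext (hS : S.IsAlgebraic) {m n : ℕ+} {f g : S.Mor m n}
    (h : ∀ k, comp f (S.proj n k) = comp g (S.proj n k)) : f = g :=
  (hS.bijective m n).1 (funext h)

def IsAlgebraic.tuple (hS : S.IsAlgebraic) {m n : ℕ+} (u : Fin n → S.Mor m 1) : S.Mor m n :=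
  (Equiv.ofBijective _ (hS.bijective m n)).symm u

variable (hS : S.IsAlgebraic) {m n : ℕ+}

theorem IsAlgebraic.tuple_comp_proj (u : Fin n → S.Mor m 1) (k : Fin n) :
    comp (hS.tuple u) (S.proj n k) = u k :=
  congrFun ((Equiv.ofBijective _ (hS.bijective m n)).apply_symm_apply u) k

theorem IsAlgebraic.tuple_eta (f : S.Mor m n) : hS.tuple (fun k => comp f (S.proj n k)) = f :=
  (Equiv.ofBijective _ (hS.bijective m n)).symm_apply_apply f

theorem IsAlgebraic.comp_tuple {a : ℕ+} (f : S.Mor a m) (u : Fin n → S.Mor m 1) :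
    hS.tuple (fun k => comp f (u k)) = comp f (hS.tuple u) :=
  hS.hom_ext fun k => by rw [tuple_comp_proj, comp_assoc, tuple_comp_proj]

theorem IsAlgebraic.tuple_proj : hS.tuple (S.proj m) = S.idMor m :=
  hS.hom_ext fun k => by rw [tuple_comp_proj, idMor_comp]

end SemiTheory

open SemiTheory

namespace STHom

variable {S T U : SemiTheory}

/-- `φ` is the identity on objects only up to `φ.obj_eq`, hence the conjugation. -/
def mapMor (φ : STHom S T) {a b : ℕ+} (f : S.Mor a b) : T.Mor a b :=
  letI := T.cat
  eqToHom (φ.obj_eq ⟨a⟩).symm ≫ fmap φ.func f ≫ eqToHom (φ.obj_eq ⟨b⟩)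

theorem mapMor_proj (φ : STHom S T) (n : ℕ+) (k : Fin n) :
    φ.mapMor (S.proj n k) = T.proj n k := by
  let _ := T.cat
  simp [mapMor, φ.proj_eq n k]

theorem mapMor_comp (φ : STHom S T) {a b c : ℕ+} (f : S.Mor a b) (g : S.Mor b c) :
    φ.mapMor (comp f g) = comp (φ.mapMor f) (φ.mapMor g) := by
  let _ := T.cat
  simp [mapMor, fmap_comp]

theorem comp_mapMor (φ : STHom S T) (ψ : STHom T U) {a b : ℕ+} (f : S.Mor a b) :
    mapMor (φ ≫ ψ : S ⟶ U) f = ψ.mapMor (φ.mapMor f) := by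
  show _ = (letI := U.cat; eqToHom (ψ.obj_eq ⟨a⟩).symm ≫ fmap ψ.func
    (letI := T.cat; eqToHom (φ.obj_eq ⟨a⟩).symm ≫ fmap φ.func f ≫ eqToHom (φ.obj_eq ⟨b⟩))
      ≫ eqToHom (ψ.obj_eq ⟨b⟩))
  let _ := U.cat
  rw [fmap_comp, fmap_comp, fmap_eqToHom, fmap_eqToHom]
  simp [mapMor, eqToHom_trans, eqToHom_trans_assoc]
  rfl

theorem ext_of_mapMor {φ ψ : STHom S T}
    (h : ∀ {a b : ℕ+} (f : S.Mor a b), φ.mapMor f = ψ.mapMor f) : φ = ψ := by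
  rcases φ with ⟨⟨objφ, mapφ, _, _⟩, hφ, _⟩
  rcases ψ with ⟨⟨objψ, mapψ, _, _⟩, hψ, _⟩
  obtain rfl : objφ = id := funext hφ
  obtain rfl : objψ = id := funext hψ
  obtain rfl : @mapφ = @mapψ := by
    funext a b f
    have hf := h (a := a.val) (b := b.val) f
    change comp (T.idMor _) (comp (mapφ f) (T.idMor _))
      = comp (T.idMor _) (comp (mapψ f) (T.idMor _)) at hf
    simpa only [idMor_comp, comp_idMor] using hf
  rfl

def ofMap (map : ∀ {a b : ℕ+}, S.Mor a b → T.Mor a b)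
    (map_id : ∀ a, map (S.idMor a) = T.idMor a)
    (map_comp : ∀ {a b c : ℕ+} (f : S.Mor a b) (g : S.Mor b c),
      map (comp f g) = comp (map f) (map g))
    (map_proj : ∀ n k, map (S.proj n k) = T.proj n k) : STHom S T where
  func := @CategoryTheory.Functor.mk Ob S.cat Ob T.cat (fun n => n) (fun f => map f)
    (fun a => map_id a.val) (fun f g => map_comp f g)
  obj_eq _ := rfl
  proj_eq n k := by
    show map (S.proj n k) = comp (T.idMor n) (comp (T.proj n k) (T.idMor 1))
    rw [idMor_comp, comp_idMor, map_proj]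

theorem mapMor_ofMap (map : ∀ {a b : ℕ+}, S.Mor a b → T.Mor a b) (map_id map_comp map_proj)
    {a b : ℕ+} (f : S.Mor a b) :
    (ofMap map map_id map_comp map_proj).mapMor f = map f := by
  show comp (T.idMor a) (comp (map f) (T.idMor b)) = map f
  rw [idMor_comp, comp_idMor]

end STHom

/-- Diagrams of shape `S` in `𝒞`; `S.Diag` is `S.DiagIn SSet`. -/
abbrev SemiTheory.DiagIn (S : SemiTheory) (𝒞 : Type*) [Category.{0} 𝒞] : Type _ :=
  @Functor Ob S.cat 𝒞 _

namespace SemiTheory.DiagIn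

variable {S T : SemiTheory} {𝒞 : Type*} [Category.{0} 𝒞]

abbrev obj' (X : S.DiagIn 𝒞) (a : ℕ+) : 𝒞 :=
  letI := S.cat
  X.obj ⟨a⟩

abbrev map' (X : S.DiagIn 𝒞) {a b : ℕ+} (f : S.Mor a b) : X.obj' a ⟶ X.obj' b :=
  letI := S.cat
  X.map f

theorem map'_id (X : S.DiagIn 𝒞) (a : ℕ+) : X.map' (S.idMor a) = 𝟙 (X.obj' a) :=
  @CategoryTheory.Functor.map_id Ob S.cat 𝒞 _ X ⟨a⟩

theorem map'_comp (X : S.DiagIn 𝒞) {a b c : ℕ+} (f : S.Mor a b) (g : S.Mor b c) :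
    X.map' (comp f g) = X.map' f ≫ X.map' g :=
  @CategoryTheory.Functor.map_comp Ob S.cat 𝒞 _ X ⟨a⟩ ⟨b⟩ ⟨c⟩ f g

abbrev precomp (φ : STHom S T) (X : T.DiagIn 𝒞) : S.DiagIn 𝒞 :=
  @Functor.comp Ob S.cat Ob T.cat 𝒞 _ φ.func X

abbrev Hom (X Y : S.DiagIn 𝒞) : Type _ := @NatTrans Ob S.cat 𝒞 _ X Y

abbrev Hom.app' {X Y : S.DiagIn 𝒞} (ψ : Hom X Y) (a : ℕ+) : X.obj' a ⟶ Y.obj' a :=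
  letI := S.cat
  ψ.app ⟨a⟩

theorem Hom.naturality' {X Y : S.DiagIn 𝒞} (ψ : Hom X Y) {a b : ℕ+} (f : S.Mor a b) :
    X.map' f ≫ ψ.app' b = ψ.app' a ≫ Y.map' f :=
  @NatTrans.naturality Ob S.cat 𝒞 _ X Y ψ ⟨a⟩ ⟨b⟩ f

/-- `X[n]` is the `n`-fold power of `X[1]`, with the images of the projections as the
product projections. -/
def IsStrict (X : S.DiagIn 𝒞) : Prop :=
  ∀ n : ℕ+, 1 < (n : ℕ) → ∀ C : 𝒞,
    Function.Bijective fun (f : C ⟶ X.obj' n) k => f ≫ X.map' (S.proj n k)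

theorem IsStrict.hom_ext {X : S.DiagIn 𝒞} (hX : X.IsStrict) {C : 𝒞} {n : ℕ+}
    {f g : C ⟶ X.obj' n} (h : ∀ k, f ≫ X.map' (S.proj n k) = g ≫ X.map' (S.proj n k)) :
    f = g := by
  by_cases hn : 1 < (n : ℕ)
  · exact (hX n hn C).1 (funext h)
  · obtain rfl : n = 1 := PNat.coe_eq_one_iff.mp (by have := n.pos; omega)
    simpa only [proj_one_eq, map'_id, Category.comp_id] using h ⟨0, Nat.one_pos⟩

end SemiTheory.DiagIn

open SemiTheory.DiagIn

section EndTheory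

variable {S : SemiTheory} {𝒞 : Type*} [Category.{0} 𝒞]

def endTheory (X : S.DiagIn 𝒞) : SemiTheory where
  cat :=
    { Hom a b := X.obj' a.val ⟶ X.obj' b.val
      id a := 𝟙 (X.obj' a.val)
      comp f g := f ≫ g
      id_comp := Category.id_comp
      comp_id := Category.comp_id
      assoc := Category.assoc }
  proj n k := X.map' (S.proj n k)
  proj_one := by rw [S.proj_one]; exact X.map'_id 1

abbrev endHom (X : S.DiagIn 𝒞) {a b : ℕ+} (f : (endTheory X).Mor a b) : X.obj' a ⟶ X.obj' b := f

def toEndTheory (X : S.DiagIn 𝒞) : STHom S (endTheory X) :=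
  STHom.ofMap X.map' X.map'_id X.map'_comp fun _ _ => rfl

theorem toEndTheory_mapMor (X : S.DiagIn 𝒞) {a b : ℕ+} (f : S.Mor a b) :
    (toEndTheory X).mapMor f = X.map' f :=
  STHom.mapMor_ofMap _ _ _ _ f

def fromEndTheory (X : S.DiagIn 𝒞) : (endTheory X).DiagIn 𝒞 :=
  @CategoryTheory.Functor.mk Ob (endTheory X).cat 𝒞 _ (fun a => X.obj' a.val) (fun f => f)
    (fun _ => rfl) (fun _ _ => rfl)

theorem endHom_tuple_comp {X : S.DiagIn 𝒞} (hX : (endTheory X).IsAlgebraic) {m n : ℕ+}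
    (u : Fin n → (X.obj' m ⟶ X.obj' 1)) (k : Fin n) :
    endHom X (hX.tuple u) ≫ X.map' (S.proj n k) = u k :=
  hX.tuple_comp_proj u k

theorem SemiTheory.DiagIn.IsStrict.isAlgebraic {X : S.DiagIn 𝒞} (hX : X.IsStrict) :
    (endTheory X).IsAlgebraic :=
  fun m n hn => hX n hn (X.obj' m)

end EndTheory

namespace Completion

/-- `node g t` stands for `g(t₁, …, tₙ)`. -/
inductive Term (S : SemiTheory) : ℕ+ → Type
  | var {m : ℕ+} (k : Fin m) : Term S m
  | node {m n : ℕ+} (g : S.Mor n 1) (t : Fin n → Term S m) : Term S m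

variable {S : SemiTheory}

inductive Term.Rel (S : SemiTheory) : {m : ℕ+} → Term S m → Term S m → Prop
  | refl {m} (t : Term S m) : Rel S t t
  | symm {m} {t u : Term S m} : Rel S t u → Rel S u t
  | trans {m} {t u v : Term S m} : Rel S t u → Rel S u v → Rel S t v
  | node_proj {m n : ℕ+} (k : Fin n) (t : Fin n → Term S m) :
      Rel S (.node (S.proj n k) t) (t k)
  | node_comp {m n' n : ℕ+} (f : S.Mor n' n) (g : S.Mor n 1) (t : Fin n' → Term S m) :
      Rel S (.node (comp f g) t) (.node g fun j => .node (comp f (S.proj n j)) t)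
  | node_congr {m n : ℕ+} (g : S.Mor n 1) {t u : Fin n → Term S m} :
      (∀ j, Rel S (t j) (u j)) → Rel S (.node g t) (.node g u)

instance Term.setoid (S : SemiTheory) (m : ℕ+) : Setoid (Term S m) :=
  ⟨Term.Rel S, ⟨.refl, .symm, .trans⟩⟩

/-- The morphisms `[m] ⟶ [1]` of the completion. -/
abbrev Op (S : SemiTheory) (m : ℕ+) : Type := Quotient (Term.setoid S m)

def Term.subst {n m : ℕ+} : Term S n → (Fin n → Term S m) → Term S m
  | .var k, σ => σ k
  | .node g t, σ => .node g fun j => (t j).subst σ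

theorem Term.Rel.subst {n m : ℕ+} {a b : Term S n} (h : Rel S a b) (σ : Fin n → Term S m) :
    Rel S (a.subst σ) (b.subst σ) := by
  induction h with
  | refl t => exact .refl _
  | symm _ ih => exact .symm ih
  | trans _ _ ih₁ ih₂ => exact .trans ih₁ ih₂
  | node_proj k t => exact .node_proj k _
  | node_comp f g t => exact .node_comp f g _
  | node_congr g _ ih => exact .node_congr g ih

theorem Term.subst_rel {n m : ℕ+} (a : Term S n) {σ τ : Fin n → Term S m}
    (h : ∀ k, Rel S (σ k) (τ k)) : Rel S (a.subst σ) (a.subst τ) := by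
  induction a with
  | var k => exact h k
  | node g t ih => exact .node_congr g ih

theorem Term.subst_var {m : ℕ+} (a : Term S m) : a.subst .var = a := by
  induction a with
  | var k => rfl
  | node g t ih => exact congrArg _ (funext ih)

theorem Term.subst_subst {a b c : ℕ+} (t : Term S c) (σ : Fin c → Term S b)
    (τ : Fin b → Term S a) : (t.subst σ).subst τ = t.subst fun k => (σ k).subst τ := by
  induction t with
  | var k => rfl
  | node g t ih => exact congrArg _ (funext ih)

def Op.subst {n m : ℕ+} (q : Op S n) (σ : Fin n → Op S m) : Op S m :=
  Quotient.liftOn₂ q (Quotient.finChoice σ) (fun t τ => ⟦t.subst τ⟧)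
    fun _ _ _ _ ht hσ => Quotient.sound (.trans (ht.subst _) (Term.subst_rel _ hσ))

theorem Op.mk_subst {n m : ℕ+} (t : Term S n) (σ : Fin n → Term S m) :
    Op.subst ⟦t⟧ (fun k => ⟦σ k⟧) = ⟦t.subst σ⟧ := by
  simp only [Op.subst, Quotient.finChoice_eq]
  rfl

theorem Op.var_subst {n m : ℕ+} (k : Fin n) (σ : Fin n → Op S m) :
    Op.subst ⟦.var k⟧ σ = σ k :=
  Quotient.induction_on_pi σ fun τ => Op.mk_subst _ τ

theorem Op.subst_var {m : ℕ+} (q : Op S m) : q.subst (fun k => ⟦.var k⟧) = q :=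
  Quotient.inductionOn q fun t => by rw [Op.mk_subst, Term.subst_var]

theorem Op.subst_subst {a b c : ℕ+} (q : Op S c) (σ : Fin c → Op S b) (τ : Fin b → Op S a) :
    (q.subst σ).subst τ = q.subst fun k => (σ k).subst τ :=
  Quotient.inductionOn q fun t => Quotient.induction_on_pi σ fun σ =>
    Quotient.induction_on_pi τ fun τ => by simp only [Op.mk_subst, Term.subst_subst]

/-- Morphisms `[a] ⟶ [b]` are `b`-tuples of operations; composition is substitution. -/
@[reducible]
def category (S : SemiTheory) : Category.{0, 0} Ob where
  Hom a b := Fin b.val → Op S a.val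
  id _ k := ⟦.var k⟧
  comp F G j := (G j).subst F
  id_comp F := funext fun j => Op.subst_var (F j)
  comp_id F := funext fun j => Op.var_subst j F
  assoc F G H := funext fun j => (Op.subst_subst (H j) G F).symm

end Completion

def completion (S : SemiTheory) : SemiTheory where
  cat := Completion.category S
  proj n k _ := ⟦.var k⟧
  proj_one := funext fun i => by
    obtain rfl : i = ⟨0, Nat.one_pos⟩ := Fin.ext (Nat.lt_one_iff.mp i.isLt)
    rfl

namespace Completion

variable {S : SemiTheory}

abbrev Op.toMor {m : ℕ+} (q : Op S m) : (completion S).Mor m 1 := fun _ => q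

theorem comp_proj {m n : ℕ+} (F : (completion S).Mor m n) (k : Fin n) :
    comp F ((completion S).proj n k) = (F k).toMor :=
  funext fun _ => Op.var_subst k F

theorem isAlgebraic (S : SemiTheory) : (completion S).IsAlgebraic := by
  intro m n _
  refine ⟨fun F G h => funext fun k => ?_, fun u => ⟨fun k => u k ⟨0, Nat.one_pos⟩, ?_⟩⟩
  · simpa only [comp_proj] using congrFun (congrFun h k) ⟨0, Nat.one_pos⟩
  · funext k j
    exact (congrFun (comp_proj _ k) j).trans
      (congrArg (u k) (Fin.ext (Nat.lt_one_iff.mp j.isLt).symm))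

def unitMap {a b : ℕ+} (f : S.Mor a b) : (completion S).Mor a b :=
  fun k => ⟦.node (comp f (S.proj b k)) .var⟧

theorem unitMap_proj (n : ℕ+) (k : Fin n) :
    unitMap (S.proj n k) = (completion S).proj n k :=
  funext fun j => Quotient.sound <| by
    rw [proj_one_eq, comp_idMor]
    exact .node_proj k _

def unit (S : SemiTheory) : STHom S (completion S) :=
  STHom.ofMap unitMap
    (fun a => funext fun k => Quotient.sound <| by
      rw [idMor_comp]
      exact .node_proj k _)
    (fun f g => funext fun k => by
      change _ = Op.subst ⟦_⟧ fun j => ⟦_⟧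
      rw [Op.mk_subst]
      refine Quotient.sound ?_
      rw [comp_assoc]
      exact .node_comp f _ _)
    unitMap_proj

theorem unit_mapMor {a b : ℕ+} (f : S.Mor a b) : (unit S).mapMor f = unitMap f :=
  STHom.mapMor_ofMap _ _ _ _ f

theorem comp_unitMap {m n : ℕ+} (t : Fin n → Term S m) (g : S.Mor n 1) :
    comp (fun j => ⟦t j⟧) (unitMap g) = Op.toMor (⟦.node g t⟧ : Op S m) :=
  funext fun j => by
    change Op.subst ⟦.node (comp g (S.proj 1 j)) .var⟧ (fun i => ⟦t i⟧) = _
    rw [Op.mk_subst, proj_one_eq, comp_idMor]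
    rfl

section Lift

variable {T : SemiTheory} (hT : T.IsAlgebraic) (φ : STHom S T)

def Term.eval {m : ℕ+} : Term S m → T.Mor m 1
  | .var k => T.proj m k
  | .node g t => comp (hT.tuple fun j => (t j).eval) (φ.mapMor g)

theorem Term.Rel.eval {m : ℕ+} {a b : Term S m} (h : Rel S a b) :
    a.eval hT φ = b.eval hT φ := by
  induction h with
  | refl t => rfl
  | symm _ ih => exact ih.symm
  | trans _ _ ih₁ ih₂ => exact ih₁.trans ih₂
  | node_proj k t => simp only [Term.eval, STHom.mapMor_proj, IsAlgebraic.tuple_comp_proj]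
  | node_comp f g t =>
    simp only [Term.eval, STHom.mapMor_comp, STHom.mapMor_proj, ← comp_assoc, hT.tuple_eta]
  | node_congr g _ ih => simp only [Term.eval, ih]

def Op.eval {m : ℕ+} (q : Op S m) : T.Mor m 1 :=
  Quotient.liftOn q (Term.eval hT φ) fun _ _ h => h.eval hT φ

theorem Term.eval_subst {n m : ℕ+} (a : Term S n) (σ : Fin n → Term S m) :
    (a.subst σ).eval hT φ = comp (hT.tuple fun k => (σ k).eval hT φ) (a.eval hT φ) := by
  induction a with
  | var k => exact (hT.tuple_comp_proj (fun k => (σ k).eval hT φ) k).symm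
  | node g t ih => simp only [Term.subst, Term.eval, ih, hT.comp_tuple, comp_assoc]

theorem Op.eval_subst {n m : ℕ+} (q : Op S n) (σ : Fin n → Op S m) :
    (q.subst σ).eval hT φ = comp (hT.tuple fun k => (σ k).eval hT φ) (q.eval hT φ) :=
  Quotient.inductionOn q fun t => Quotient.induction_on_pi σ fun σ => by
    rw [Op.mk_subst]
    exact Term.eval_subst hT φ t σ

def liftMap {a b : ℕ+} (F : (completion S).Mor a b) : T.Mor a b :=
  hT.tuple fun k => (F k).eval hT φ

def lift : STHom (completion S) T :=
  STHom.ofMap (liftMap hT φ)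
    (fun _ => hT.tuple_proj)
    (fun F G => (congrArg hT.tuple (funext fun k => Op.eval_subst hT φ (G k) F)).trans
      (hT.comp_tuple _ _))
    (fun n k => hT.hom_ext fun j => by
      rw [liftMap, hT.tuple_comp_proj, proj_one_eq, comp_idMor]
      rfl)

theorem lift_mapMor {a b : ℕ+} (F : (completion S).Mor a b) :
    (lift hT φ).mapMor F = hT.tuple fun k => (F k).eval hT φ :=
  STHom.mapMor_ofMap _ _ _ _ F

theorem unit_comp_lift : (unit S ≫ lift hT φ : S ⟶ T) = φ :=
  STHom.ext_of_mapMor fun f => by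
    rw [STHom.comp_mapMor, unit_mapMor, lift_mapMor]
    refine (congrArg hT.tuple (funext fun k => ?_)).trans (hT.tuple_eta _)
    change comp (hT.tuple (T.proj _)) (φ.mapMor (comp f (S.proj _ k))) = _
    rw [hT.tuple_proj, idMor_comp, STHom.mapMor_comp, STHom.mapMor_proj]

theorem tuple_mapMor_toMor (Ψ : STHom (completion S) T) {m n : ℕ+}
    (F : (completion S).Mor m n) : hT.tuple (fun j => Ψ.mapMor (F j).toMor) = Ψ.mapMor F := by
  simp only [← comp_proj, STHom.mapMor_comp, STHom.mapMor_proj, hT.tuple_eta]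

theorem Term.eval_unit_comp (Ψ : STHom (completion S) T) {m : ℕ+} (t : Term S m) :
    t.eval hT (unit S ≫ Ψ : S ⟶ T) = Ψ.mapMor (Op.toMor (⟦t⟧ : Op S m)) := by
  induction t with
  | var k => exact (Ψ.mapMor_proj _ k).symm
  | node g t ih =>
    rw [Term.eval, funext ih, tuple_mapMor_toMor hT Ψ fun j => (⟦t j⟧ : Op S m),
      STHom.comp_mapMor, unit_mapMor]
    exact (Ψ.mapMor_comp _ _).symm.trans (congrArg Ψ.mapMor (comp_unitMap t g))

theorem lift_unit_comp (Ψ : STHom (completion S) T) : lift hT (unit S ≫ Ψ : S ⟶ T) = Ψ :=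
  STHom.ext_of_mapMor fun F => by
    rw [lift_mapMor, ← tuple_mapMor_toMor hT]
    congr 1
    funext k
    exact Quotient.inductionOn (F k) (Term.eval_unit_comp hT Ψ)

end Lift

def asAlgebraic (S : SemiTheory) : ObjectProperty.FullSubcategory SemiTheory.IsAlgebraic :=
  ⟨completion S, isAlgebraic S⟩

def homEquiv (S : SemiTheory) (T : ObjectProperty.FullSubcategory SemiTheory.IsAlgebraic) :
    (asAlgebraic S ⟶ T) ≃ (S ⟶ (ObjectProperty.ι SemiTheory.IsAlgebraic).obj T) where
  toFun Ψ := unit S ≫ Ψ.hom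
  invFun φ := ObjectProperty.homMk (lift T.property φ)
  left_inv Ψ := InducedCategory.Hom.ext (lift_unit_comp T.property Ψ.hom)
  right_inv φ := unit_comp_lift T.property φ

theorem homEquiv_naturality (S : SemiTheory)
    (T T' : ObjectProperty.FullSubcategory SemiTheory.IsAlgebraic) (g : T ⟶ T')
    (Ψ : asAlgebraic S ⟶ T) :
    homEquiv S T' (Ψ ≫ g) = homEquiv S T Ψ ≫ (ObjectProperty.ι SemiTheory.IsAlgebraic).map g :=
  (Category.assoc (unit S : S ⟶ completion S) Ψ.hom g.hom).symm

def adjunction :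
    Adjunction.leftAdjointOfEquiv homEquiv homEquiv_naturality ⊣
      ObjectProperty.ι SemiTheory.IsAlgebraic :=
  Adjunction.adjunctionOfEquivLeft _ _

theorem adjunction_unit_app (S : SemiTheory) : adjunction.unit.app S = unit S :=
  show (unit S ≫ 𝟙 (completion S) : S ⟶ completion S) = unit S from Category.comp_id _

section Extension

variable {𝒞 : Type*} [Category.{0} 𝒞]

def extension (X : S.DiagIn 𝒞) (hX : (endTheory X).IsAlgebraic) : (completion S).DiagIn 𝒞 :=
  precomp (lift hX (toEndTheory X)) (fromEndTheory X)

theorem precomp_unit_extension (X : S.DiagIn 𝒞) (hX : (endTheory X).IsAlgebraic) :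
    precomp (unit S) (extension X hX) = X :=
  congrArg (fun φ => precomp φ (fromEndTheory X)) (unit_comp_lift hX (toEndTheory X))

theorem extension_precomp_unit (A : (completion S).DiagIn 𝒞)
    (hA : (endTheory (precomp (unit S) A)).IsAlgebraic) : extension _ hA = A := by
  let Ψ : STHom (completion S) (endTheory (precomp (unit S) A)) :=
    STHom.ofMap A.map' A.map'_id A.map'_comp
      fun n k => congrArg A.map' (unitMap_proj n k).symm
  have hΨ : (unit S ≫ Ψ : S ⟶ _) = toEndTheory _ := STHom.ext_of_mapMor fun f => by
    rw [STHom.comp_mapMor, unit_mapMor, toEndTheory_mapMor]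
    exact STHom.mapMor_ofMap _ _ _ _ _
  unfold extension
  rw [← hΨ, lift_unit_comp]
  rfl

variable {X Y : S.DiagIn 𝒞} (hX : (endTheory X).IsAlgebraic) (hY : Y.IsStrict) (ψ : Hom X Y)

/-- Here the domain is `X[m]`, not some `Y[m]`: this is where strictness of `Y`, rather than
algebraicity of its endomorphism theory, is needed. -/
theorem tuple_comp_app {m n : ℕ+} {u : Fin n → (X.obj' m ⟶ X.obj' 1)}
    {v : Fin n → (Y.obj' m ⟶ Y.obj' 1)} (h : ∀ k, u k ≫ ψ.app' 1 = ψ.app' m ≫ v k) :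
    endHom X (hX.tuple u) ≫ ψ.app' n = ψ.app' m ≫ endHom Y (hY.isAlgebraic.tuple v) :=
  hY.hom_ext fun k => by
    rw [Category.assoc, ← ψ.naturality', ← Category.assoc, endHom_tuple_comp, h,
      Category.assoc, endHom_tuple_comp]

theorem Term.eval_comp_app {m : ℕ+} (t : Term S m) :
    endHom X (t.eval hX (toEndTheory X)) ≫ ψ.app' 1 =
      ψ.app' m ≫ endHom Y (t.eval hY.isAlgebraic (toEndTheory Y)) := by
  induction t with
  | var k => exact ψ.naturality' (S.proj m k)
  | node g t ih =>
    change (endHom X (hX.tuple _) ≫ (toEndTheory X).mapMor g) ≫ _ =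
      _ ≫ endHom Y (hY.isAlgebraic.tuple _) ≫ (toEndTheory Y).mapMor g
    rw [toEndTheory_mapMor, toEndTheory_mapMor, Category.assoc, ψ.naturality',
      ← Category.assoc, tuple_comp_app hX hY ψ ih, Category.assoc]

def extensionMap : Hom (extension X hX) (extension Y hY.isAlgebraic) :=
  @NatTrans.mk Ob (completion S).cat 𝒞 _ _ _ (fun a => ψ.app' a.val) fun a _ F =>
    tuple_comp_app hX hY ψ fun k =>
      Quotient.inductionOn (motive := fun q : Op S a.val =>
        endHom X (q.eval hX (toEndTheory X)) ≫ ψ.app' 1 =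
          ψ.app' a.val ≫ endHom Y (q.eval hY.isAlgebraic (toEndTheory Y)))
        (F k) (Term.eval_comp_app hX hY ψ)

end Extension

end Completion

namespace finPow

variable {n : ℕ+} {B C : SSet}

def lift (u : Fin n → (C ⟶ B)) : C ⟶ finPow n B where
  app m := ↾fun c k => (u k).app m c
  naturality _ _ θ := by
    ext c
    funext k
    exact NatTrans.naturality_apply (u k) θ c

def π (n : ℕ+) (B : SSet) (k : Fin n) : finPow n B ⟶ B where
  app _ := ↾fun b => b k

theorem lift_π (u : Fin n → (C ⟶ B)) (k : Fin n) : lift u ≫ π n B k = u k := rfl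

theorem hom_ext {f g : C ⟶ finPow n B} (h : ∀ k, f ≫ π n B k = g ≫ π n B k) : f = g := by
  ext m c
  funext k
  exact congrArg (fun φ => (φ : C ⟶ B).app m c) (h k)

end finPow

open Completion

section Strictness

variable {S : SemiTheory}

theorem isStrict_of_isStrictAlgebra {X : S.Diag} (hX : S.IsStrictAlgebra X) : IsStrict X := by
  intro n hn C
  let e := @asIso _ _ _ _ (S.projFan X n) (hX n hn)
  refine ⟨fun f g h => (cancel_mono e.hom).1 (finPow.hom_ext fun k => ?_),
    fun u => ⟨finPow.lift u ≫ e.inv, funext fun k => ?_⟩⟩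
  · rw [Category.assoc, Category.assoc]
    exact congrFun h k
  · change (finPow.lift u ≫ e.inv) ≫ e.hom ≫ finPow.π n _ k = u k
    rw [Category.assoc, e.inv_hom_id_assoc, finPow.lift_π]

theorem isStrictAlgebra_precomp_unit_iff (A : (completion S).Diag) :
    S.IsStrictAlgebra (precomp (unit S) A) ↔ (completion S).IsStrictAlgebra A := by
  have h : ∀ n, S.projFan (precomp (unit S) A) n = (completion S).projFan A n := fun n =>
    finPow.hom_ext fun k => congrArg (map' A) (unitMap_proj n k)
  exact forall_congr' fun n => by rw [h n]; exact Iff.rfl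

end Strictness

theorem fullSubcategory_functor_eq_id {C D : Type*} [Category C] [Category D]
    {P : ObjectProperty (C ⥤ D)} (G : P.FullSubcategory ⥤ P.FullSubcategory)
    (hobj : ∀ A, (G.obj A).obj = A.obj)
    (happ : ∀ {A B : P.FullSubcategory} (φ : A ⟶ B) c, (G.map φ).hom.app c ≍ φ.hom.app c) :
    G = 𝟭 _ := by
  refine CategoryTheory.Functor.ext (fun A => ObjectProperty.FullSubcategory.ext (hobj A))
    fun A B φ => ?_
  ext c
  simp only [Functor.id_map, ObjectProperty.FullSubcategory.comp_hom, ObjectProperty.eqToHom_hom,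
    NatTrans.comp_app, eqToHom_app]
  exact (conj_eqToHom_iff_heq' _ _ _ _).2 (happ φ c)

namespace Completion

variable (S : SemiTheory)

def restrictAlg : (completion S).Alg ⥤ S.Alg where
  obj A := ⟨(unit S).restrict A.obj, (isStrictAlgebra_precomp_unit_iff A.obj).2 A.property⟩
  map φ := ObjectProperty.homMk ((unit S).restrictMap φ.hom)

def extendAlg : S.Alg ⥤ (completion S).Alg where
  obj X := ⟨extension X.obj (isStrict_of_isStrictAlgebra X.property).isAlgebraic,
    (isStrictAlgebra_precomp_unit_iff _).1 (by rw [precomp_unit_extension]; exact X.property)⟩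
  map {_ Y} ψ := ObjectProperty.homMk
    (extensionMap _ (isStrict_of_isStrictAlgebra Y.property) ψ.hom)

theorem unit_inducesAlgebraIso : (unit S).inducesAlgebraIso := by
  refine ⟨restrictAlg S, extendAlg S, fun _ => rfl, fun _ _ _ => ?_, ?_, ?_⟩
  · exact (conj_eqToHom_iff_heq' _ _ _ _).2 HEq.rfl
  · exact @fullSubcategory_functor_eq_id Ob SSet (completion S).cat _ _
      (restrictAlg S ⋙ extendAlg S) (fun A => extension_precomp_unit A.obj _) fun _ _ => HEq.rfl
  · exact @fullSubcategory_functor_eq_id Ob SSet S.cat _ _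
      (extendAlg S ⋙ restrictAlg S) (fun X => precomp_unit_extension X.obj _) fun _ _ => HEq.rfl

end Completion

theorem completion_adjunction_exists :
    ∃ (L : SemiTheory ⥤ ObjectProperty.FullSubcategory SemiTheory.IsAlgebraic)
      (adj : L ⊣ ObjectProperty.ι SemiTheory.IsAlgebraic),
      ∀ C : SemiTheory, STHom.inducesAlgebraIso (adj.unit.app C) :=
  ⟨_, Completion.adjunction, fun S => by
    rw [Completion.adjunction_unit_app]
    exact Completion.unit_inducesAlgebraIso S⟩

end SemiThPaper
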